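/- Let A be a commutative semisimple Fréchet algebra that is a BSE-algebra and whose character space Δ(A) is discrete, and let I be an essential closed ideal of A, regarded as a commutative topological ℂ-algebra with the subspace topology. Then for every BSE-function w on Δ(I) there exists a multiplier S of I such that ψ(S x) = w(ψ) ψ(x) for all ψ ∈ Δ(I) and x ∈ I; that is, C_BSE(Δ(I)) ⊆ M̂(I). -/

import Mathlib

open WeakDual Filter Topology Bornology

/-- A function `σ` on the character space of a commutative topological `ℂ`-algebra `A` is a
*BSE-function* if it is bounded and continuous and there are a von Neumann bounded set `M ⊆ A`
and a constant `β ≥ 0` such that `‖∑ cᵢ σ(φᵢ)‖ ≤ β ⬝ sup_{a ∈ M} ‖∑ cᵢ φᵢ(a)‖` for all finite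
families of coefficients `cᵢ ∈ ℂ` and characters `φᵢ ∈ Δ(A)`. -/
def IsBSEFunction {A : Type*} [NonUnitalCommRing A] [Module ℂ A] [TopologicalSpace A]
    (σ : characterSpace ℂ A → ℂ) : Prop :=
  Continuous σ ∧ (∃ C : ℝ, ∀ φ, ‖σ φ‖ ≤ C) ∧
    ∃ (M : Set A) (β : ℝ), 0 ≤ β ∧ IsVonNBounded ℂ M ∧
      ∀ (n : ℕ) (c : Fin n → ℂ) (φ : Fin n → characterSpace ℂ A),
        ‖∑ i, c i * σ (φ i)‖ ≤ β * ⨆ a ∈ M, ‖∑ i, c i * (φ i) a‖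

/-- A *multiplier* of `A` is a continuous linear map `T : A → A` with `T (a*b) = a * T b`. -/
def IsMultiplier {A : Type*} [NonUnitalCommRing A] [Module ℂ A] [TopologicalSpace A]
    (T : A →L[ℂ] A) : Prop :=
  ∀ a b : A, T (a * b) = a * T b

/-- A commutative topological `ℂ`-algebra is *semisimple* if the intersection of the kernels of
all its characters is `{0}`. -/
def IsSemisimple (A : Type*) [NonUnitalCommRing A] [Module ℂ A] [TopologicalSpace A] : Prop :=
  ∀ a : A, (∀ φ : characterSpace ℂ A, φ a = 0) → a = 0

/-- A commutative (semisimple) topological `ℂ`-algebra `A` is a *BSE-algebra* if every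
multiplier of `A` has a BSE-function as Gelfand transform, and conversely every BSE-function on
`Δ(A)` arises in this way from a multiplier of `A`. -/
def IsBSEAlgebra (A : Type*) [NonUnitalCommRing A] [Module ℂ A] [TopologicalSpace A] : Prop :=
  (∀ T : A →L[ℂ] A, IsMultiplier T →
      ∃ σ : characterSpace ℂ A → ℂ, IsBSEFunction σ ∧
        ∀ (φ : characterSpace ℂ A) (a : A), φ (T a) = σ φ * φ a) ∧
  (∀ σ : characterSpace ℂ A → ℂ, IsBSEFunction σ →
      ∃ T : A →L[ℂ] A, IsMultiplier T ∧
        ∀ (φ : characterSpace ℂ A) (a : A), φ (T a) = σ φ * φ a)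

/-- A (not necessarily unital) commutative topological `ℂ`-algebra is a *Fréchet algebra* if it
is complete and its topology is generated by a countable increasing family of submultiplicative
seminorms (hence it is a complete metrizable locally convex algebra). -/
def IsFrechetAlgebra (A : Type*) [NonUnitalCommRing A] [Module ℂ A]
    [UniformSpace A] : Prop :=
  ∃ p : ℕ → Seminorm ℂ A, WithSeminorms p ∧ Monotone p ∧
    (∀ (ℓ : ℕ) (x y : A), p ℓ (x * y) ≤ p ℓ x * p ℓ y) ∧ CompleteSpace A

/-- A closed ideal `I` of `A` is *essential* if `I` equals the closed linear span of
`{a * x : a ∈ A, x ∈ I}`. -/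
def IsEssentialIdeal {A : Type*} [CommRing A] [Algebra ℂ A] [TopologicalSpace A]
    (I : Ideal A) : Prop :=
  (I : Set A) =
    closure (Submodule.span ℂ {z : A | ∃ (a : A) (x : A), x ∈ I ∧ z = a * x} : Set A)


/-! The BSE-function `w` on `Δ(I)` is transported to `Δ(A)` as `σ(φ) = w(φ|_I)`, put to `0` where
`φ` vanishes on `I`. Discreteness of `Δ(A)` makes `σ` continuous, and `σ` satisfies the BSE
inequality with the same bounded set `M ⊆ I ⊆ A` as `w`, so `σ` is the Gelfand transform of a
multiplier `T` of `A`. Since `T (a x) = x T a ∈ I` for `x ∈ I` and `I` is an essential closed ideal,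
`T` maps `I` into itself. Every character `ψ` of `I` extends to the character `a ↦ ψ(a u) / ψ(u)` of
`A` (continuous because multiplication in a Fréchet algebra is), so `T|_I` has transform `w`. -/

theorem IsFrechetAlgebra.continuous_mul_right {A : Type*} [CommRing A] [Algebra ℂ A]
    [UniformSpace A] (hA : IsFrechetAlgebra A) (u : A) : Continuous (· * u) := by
  obtain ⟨p, hp, -, hmul, -⟩ := hA
  refine hp.continuous_of_isBounded hp (LinearMap.mulRight ℂ u) <|
    Seminorm.IsBounded.of_real fun i => ⟨{i}, p i u, fun x => ?_⟩
  simpa [mul_comm (p i u)] using hmul i x u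

theorem Real.biSup_image_eq_of_nonneg {ι ι' : Type*} {s : Set ι} {f : ι → ι'} {g : ι' → ℝ}
    (hg : ∀ y, 0 ≤ g y) : ⨆ y ∈ f '' s, g y = ⨆ x ∈ s, g (f x) := by
  by_cases hbdd : BddAbove (Set.range fun x : s => g (f x))
  · exact ciSup_image hbdd (Real.sSup_empty.trans_le (Real.iSup_nonneg fun _ => hg _))
  · have hbdd' : ¬BddAbove (Set.range fun y : f '' s => g y) := by
      simpa [bddAbove_def] using hbdd
    rw [cbiSup_of_not_bddAbove hbdd', cbiSup_of_not_bddAbove hbdd]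

namespace WeakDual

theorem norm_sum_mul_extend_le {B : Type*} [NonUnitalCommRing B] [Module ℂ B]
    [TopologicalSpace B] {w : characterSpace ℂ B → ℂ} {M : Set B} {β : ℝ} (hβ : 0 ≤ β)
    (hw : ∀ (n : ℕ) (c : Fin n → ℂ) (ψ : Fin n → characterSpace ℂ B),
      ‖∑ i, c i * w (ψ i)‖ ≤ β * ⨆ x ∈ M, ‖∑ i, c i * ψ i x‖)
    {n : ℕ} (c : Fin n → ℂ) (χ : Fin n → WeakDual ℂ B)
    (hχ : ∀ i, χ i = 0 ∨ χ i ∈ characterSpace ℂ B) :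
    ‖∑ i, c i * Function.extend (↑) w (0 : WeakDual ℂ B → ℂ) (χ i)‖ ≤
      β * ⨆ x ∈ M, ‖∑ i, c i * χ i x‖ := by
  classical
  cases isEmpty_or_nonempty (characterSpace ℂ B) with
  | inl hempty =>
    have hzero (i : Fin n) : Function.extend (↑) w (0 : WeakDual ℂ B → ℂ) (χ i) = 0 :=
      Function.extend_val_apply' fun h => hempty.false ⟨_, h⟩
    simp only [hzero, mul_zero, Finset.sum_const_zero, norm_zero]
    exact mul_nonneg hβ (Real.iSup_nonneg fun _ => Real.iSup_nonneg fun _ => norm_nonneg _)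
  | inr hne =>
    obtain ⟨ψ₀⟩ := hne
    let ψ : Fin n → characterSpace ℂ B := fun i =>
      if h : χ i ∈ characterSpace ℂ B then ⟨_, h⟩ else ψ₀
    let c' : Fin n → ℂ := fun i => if χ i ∈ characterSpace ℂ B then c i else 0
    have hw' (i : Fin n) :
        c i * Function.extend (↑) w (0 : WeakDual ℂ B → ℂ) (χ i) = c' i * w (ψ i) := by
      by_cases h : χ i ∈ characterSpace ℂ B
      · simp only [ψ, c', dif_pos h, if_pos h, Function.extend_val_apply h]
      · simp only [ψ, c', if_neg h, Function.extend_val_apply' h, Pi.zero_apply, mul_zero,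
          zero_mul]
    have hχ' (i : Fin n) (x : B) : c i * χ i x = c' i * ψ i x := by
      by_cases h : χ i ∈ characterSpace ℂ B
      · simp only [ψ, c', dif_pos h, if_pos h]
        rfl
      · simp only [c', if_neg h, zero_mul, (hχ i).resolve_right h]
        exact mul_zero (c i)
    simpa only [hw', hχ'] using hw n c' ψ

end WeakDual

section Ideals

variable {A : Type*} [CommRing A] [Algebra ℂ A] [TopologicalSpace A] {I : Ideal A}

variable (R : Type*) [CommSemiring R] [Algebra R A] in
def Ideal.subtypeL (I : Ideal A) : I →L[R] A :=
  (I.restrictScalars R).subtypeL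

namespace WeakDual

variable (I) in
noncomputable def restrictIdeal (φ : WeakDual ℂ A) : WeakDual ℂ I :=
  (φ : A →L[ℂ] ℂ).comp (I.subtypeL ℂ)

theorem restrictIdeal_eq_zero_or_mem_characterSpace (φ : characterSpace ℂ A) :
    restrictIdeal I φ = 0 ∨ restrictIdeal I φ ∈ characterSpace ℂ I :=
  or_iff_not_imp_left.2 fun h => ⟨h, fun x y => map_mul φ (x : A) y⟩

theorem exists_restrictIdeal_eq (hmul : ∀ u : A, Continuous (· * u))
    (ψ : characterSpace ℂ I) : ∃ φ : characterSpace ℂ A, restrictIdeal I φ = ψ := by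
  obtain ⟨u, hu⟩ : ∃ u, ψ u ≠ 0 := by
    by_contra! h
    exact ψ.prop.1 (ContinuousLinearMap.ext h)
  let L : A →L[ℂ] I :=
    ⟨(LinearMap.toSpanSingleton A I u).restrictScalars ℂ, (hmul u).subtype_mk _⟩
  let Φ : WeakDual ℂ A := (ψ u)⁻¹ • ((ψ : WeakDual ℂ I) : I →L[ℂ] ℂ).comp L
  have hΦ (a : A) (x : I) : Φ a * ψ x = ψ (a • x) := by
    have : ψ (a • u) * ψ x = ψ (a • x) * ψ u := by
      rw [← map_mul, ← map_mul]
      congr 1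
      ext
      simp only [MulMemClass.coe_mul, SetLike.val_smul, smul_eq_mul]
      ring
    calc Φ a * ψ x = (ψ u)⁻¹ * (ψ (a • u) * ψ x) := mul_assoc _ _ _
      _ = ψ (a • x) := by rw [this, mul_left_comm, inv_mul_cancel₀ hu, mul_one]
  have hΦI : restrictIdeal I Φ = ψ :=
    ContinuousLinearMap.ext fun x => mul_right_cancel₀ hu ((hΦ x u).trans (map_mul ψ x u))
  refine ⟨⟨Φ, fun h => ψ.prop.1 ?_, fun a b => mul_right_cancel₀ hu ?_⟩, hΦI⟩
  · rw [← hΦI, h]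
    rfl
  · rw [hΦ, mul_assoc, hΦ, hΦ, mul_smul]

end WeakDual

theorem IsBSEFunction.extend_comp_restrictIdeal [DiscreteTopology (characterSpace ℂ A)]
    {w : characterSpace ℂ I → ℂ} (hw : IsBSEFunction w) :
    IsBSEFunction fun φ : characterSpace ℂ A =>
      Function.extend (↑) w (0 : WeakDual ℂ I → ℂ) (restrictIdeal I φ) := by
  obtain ⟨-, ⟨C, hC⟩, M, β, hβ, hM, hwM⟩ := hw
  have hbound (χ : WeakDual ℂ I) :
      ‖Function.extend (↑) w (0 : WeakDual ℂ I → ℂ) χ‖ ≤ max C 0 := by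
    by_cases h : χ ∈ characterSpace ℂ I
    · rw [Function.extend_val_apply h]
      exact (hC _).trans (le_max_left _ _)
    · simp [Function.extend_val_apply' h]
  refine ⟨continuous_of_discreteTopology, ⟨max C 0, fun φ => hbound _⟩,
    I.subtypeL ℂ '' M, β, hβ, hM.image _, fun n c φ => ?_⟩
  rw [Real.biSup_image_eq_of_nonneg fun _ => norm_nonneg _]
  exact norm_sum_mul_extend_le hβ hwM c _ fun i => restrictIdeal_eq_zero_or_mem_characterSpace _

variable {T : A →L[ℂ] A}

theorem IsMultiplier.mem_of_isEssentialIdeal (hT : IsMultiplier T) (hIc : IsClosed (I : Set A))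
    (hIe : IsEssentialIdeal I) {y : A} (hy : y ∈ I) : T y ∈ I := by
  let J : Submodule ℂ A := (I.restrictScalars ℂ).comap (T : A →ₗ[ℂ] A)
  have hspan : Submodule.span ℂ {z : A | ∃ (a : A) (x : A), x ∈ I ∧ z = a * x} ≤ J := by
    rw [Submodule.span_le]
    rintro _ ⟨a, x, hx, rfl⟩
    show T (a * x) ∈ I
    rw [mul_comm, hT]
    exact I.mul_mem_right _ hx
  exact (hIc.preimage T.continuous).closure_subset (closure_mono hspan (hIe ▸ hy))

theorem IsMultiplier.exists_restrict (hT : IsMultiplier T) (hTI : ∀ y ∈ I, T y ∈ I) :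
    ∃ S : I →L[ℂ] I, IsMultiplier S ∧ ∀ x : I, (S x : A) = T x :=
  ⟨T.restrict (p := I.restrictScalars ℂ) (q := I.restrictScalars ℂ) hTI,
    fun a b => Subtype.ext (hT a b), fun _ => rfl⟩

end Ideals

theorem bse_function_of_ideal_is_multiplier_transform_general
    {A : Type*} [CommRing A] [Algebra ℂ A] [UniformSpace A]
    (hA : IsFrechetAlgebra A) (hABSE : IsBSEAlgebra A)
    (hdisc : DiscreteTopology (characterSpace ℂ A))
    (I : Ideal A) (hIc : IsClosed (I : Set A)) (hIe : IsEssentialIdeal I)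
    (w : characterSpace ℂ ↥I → ℂ) (hw : IsBSEFunction w) :
    ∃ S : ↥I →L[ℂ] ↥I, IsMultiplier S ∧
      ∀ (ψ : characterSpace ℂ ↥I) (x : ↥I), ψ (S x) = w ψ * ψ x := by
  obtain ⟨T, hT, hTσ⟩ := hABSE.2 _ hw.extend_comp_restrictIdeal
  obtain ⟨S, hS, hST⟩ := hT.exists_restrict fun _ => hT.mem_of_isEssentialIdeal hIc hIe
  refine ⟨S, hS, fun ψ x => ?_⟩
  obtain ⟨φ, hφ⟩ := exists_restrictIdeal_eq hA.continuous_mul_right ψ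
  have hφψ (y : I) : φ y = ψ y := DFunLike.congr_fun hφ y
  rw [← hφψ, hST, hTσ, hφ, Function.extend_val_apply ψ.2, hφψ]

/-- Let `A` be a commutative semisimple Fréchet algebra which is a BSE-algebra
and whose character space is discrete, and let `I` be an essential closed ideal of `A` (with the
subspace topology).  Then for every BSE-function `w` on `Δ(I)` there is a multiplier `S` of `I`
with `ψ(S x) = w(ψ) ψ(x)` for all `ψ ∈ Δ(I)` and `x ∈ I`; that is,
`C_BSE(Δ(I)) ⊆ M̂(I)`. -/
theorem bse_function_of_ideal_is_multiplier_transform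
    {A : Type*} [CommRing A] [Algebra ℂ A] [UniformSpace A] [IsUniformAddGroup A]
    (hA : IsFrechetAlgebra A) (hAss : IsSemisimple A) (hABSE : IsBSEAlgebra A)
    (hdisc : DiscreteTopology (characterSpace ℂ A))
    (I : Ideal A) (hIc : IsClosed (I : Set A)) (hIe : IsEssentialIdeal I)
    (w : characterSpace ℂ ↥I → ℂ) (hw : IsBSEFunction w) :
    ∃ S : ↥I →L[ℂ] ↥I, IsMultiplier S ∧
      ∀ (ψ : characterSpace ℂ ↥I) (x : ↥I), ψ (S x) = w ψ * ψ x :=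
  bse_function_of_ideal_is_multiplier_transform_general hA hABSE hdisc I hIc hIe w hw
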